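/- Let s ∈ [0,1), t ∈ {1,2}, and let V ∈ L¹(ℝ²) be real-valued and satisfy conditions (V_ln_s) and (V_roll). Then the integrals I₁(α) := ∫_{{(x,y) : ln‖x−y‖ < 1}} |V(x)|·|G(x,y;α) − g(α)|^t·|V(y)| d(x,y) are bounded uniformly in α ∈ (0, 1/e); that is, there exists C > 0 such that I₁(α) ≤ C for all α ∈ (0, 1/e). -/

import Mathlib

open MeasureTheory

/-- The modified Bessel function of the second kind of order zero,
via its integral representation `K₀(w) = ∫₀^∞ exp(−w·cosh t) dt`. -/
noncomputable def K0 (w : ℝ) : ℝ := ∫ t in Set.Ioi (0 : ℝ), Real.exp (-w * Real.cosh t)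

/-- The Green's function of the free resolvent `(-Δ + α²)⁻¹` in two dimensions:
`G(x,y;α) = (1/(2π))·K₀(α‖x−y‖)`. -/
noncomputable def G (x y : EuclideanSpace ℝ (Fin 2)) (α : ℝ) : ℝ :=
  (1 / (2 * Real.pi)) * K0 (α * ‖x - y‖)

/-- The function `g(α) = −(ln α)/(2π)`. -/
noncomputable def g (α : ℝ) : ℝ := -(Real.log α) / (2 * Real.pi)

lemma cosh_ge_self {t : ℝ} (ht : 0 ≤ t) : t ≤ Real.cosh t := by
  have h1 : t / 2 + 1 ≤ Real.exp (t / 2) := Real.add_one_le_exp _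
  have h2 : Real.exp t = Real.exp (t / 2) * Real.exp (t / 2) := by
    rw [← Real.exp_add]; ring_nf
  have h3 : 0 < Real.exp (-t) := Real.exp_pos _
  rw [Real.cosh_eq]
  nlinarith [sq_nonneg (t / 2 - 1)]

lemma K0_integrableOn {w : ℝ} (hw : 0 < w) :
    IntegrableOn (fun t => Real.exp (-w * Real.cosh t)) (Set.Ioi (0:ℝ)) := by
  apply MeasureTheory.Integrable.mono (exp_neg_integrableOn_Ioi 0 hw)
  · exact (Real.continuous_exp.comp ((continuous_const.mul Real.continuous_cosh))).aestronglyMeasurable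
  · filter_upwards [ae_restrict_mem measurableSet_Ioi] with t ht
    rw [Real.norm_eq_abs, Real.norm_eq_abs, abs_of_pos (Real.exp_pos _),
      abs_of_pos (Real.exp_pos _)]
    apply Real.exp_le_exp.2
    have := cosh_ge_self (le_of_lt ht)
    nlinarith

lemma K0_upper {w : ℝ} (hw0 : 0 < w) (hw1 : w ≤ 1) : K0 w ≤ -Real.log w + 2 := by
  set f : ℝ → ℝ := fun t => Real.exp (-w * Real.cosh t) with hf
  set T : ℝ := Real.log (2 / w) with hT
  have hT0 : 0 < T := Real.log_pos (by rw [lt_div_iff₀ hw0]; linarith)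
  have hexpT : Real.exp T = 2 / w := Real.exp_log (by positivity)
  have hint : IntegrableOn f (Set.Ioi (0:ℝ)) := K0_integrableOn hw0
  have hsplit : K0 w = (∫ t in Set.Ioc 0 T, f t) + ∫ t in Set.Ioi T, f t := by
    rw [K0, ← Set.Ioc_union_Ioi_eq_Ioi hT0.le]
    exact setIntegral_union (Set.Ioc_disjoint_Ioi le_rfl) measurableSet_Ioi
      (hint.mono_set (by rw [← Set.Ioc_union_Ioi_eq_Ioi hT0.le]; exact Set.subset_union_left))
      (hint.mono_set (by rw [← Set.Ioc_union_Ioi_eq_Ioi hT0.le]; exact Set.subset_union_right))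
  have h1 : (∫ t in Set.Ioc 0 T, f t) ≤ T := by
    have : (∫ t in Set.Ioc 0 T, f t) ≤ ∫ t in Set.Ioc 0 T, (1:ℝ) := by
      apply setIntegral_mono_on
        (hint.mono_set (by rw [← Set.Ioc_union_Ioi_eq_Ioi hT0.le]; exact Set.subset_union_left))
        (integrableOn_const (by rw [Real.volume_Ioc]; exact ENNReal.ofReal_ne_top))
        measurableSet_Ioc
      intro t _
      have hc : -w * Real.cosh t ≤ 0 := by nlinarith [Real.cosh_pos t]
      calc f t = Real.exp (-w * Real.cosh t) := rfl
        _ ≤ Real.exp 0 := Real.exp_le_exp.2 hc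
        _ = 1 := Real.exp_zero
    rw [setIntegral_const] at this
    simp [Real.volume_Ioc, ENNReal.toReal_ofReal hT0.le] at this
    rcases this with h | h <;> linarith [hT0]
  have h2 : (∫ t in Set.Ioi T, f t) ≤ 1 := by
    have hle : (∫ t in Set.Ioi T, f t) ≤ ∫ t in Set.Ioi T, Real.exp T * Real.exp (-1) * Real.exp (-t) := by
      apply setIntegral_mono_on
        (hint.mono_set (fun x hx => lt_trans hT0 hx))
        (by
          have hbase : IntegrableOn (fun x => Real.exp (-x)) (Set.Ioi T) := by
            simpa using exp_neg_integrableOn_Ioi T one_pos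
          exact hbase.const_mul (Real.exp T * Real.exp (-1)))
        measurableSet_Ioi
      intro u hu
      have hu' : T < u := hu
      have key : 1 + (u - T) ≤ w * Real.cosh u := by
        have h3 : Real.exp (u - T) = w * Real.exp u / 2 := by
          rw [Real.exp_sub, hexpT]; field_simp
        have h4 : w * Real.exp u / 2 ≤ w * Real.cosh u := by
          rw [Real.cosh_eq]; nlinarith [Real.exp_pos (-u), hw0]
        nlinarith [Real.add_one_le_exp (u - T)]
      calc f u ≤ Real.exp (-(1 + (u - T))) :=
            Real.exp_le_exp.2 (by linarith)
        _ = Real.exp T * Real.exp (-1) * Real.exp (-u) := by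
            rw [← Real.exp_add, ← Real.exp_add]; ring_nf
    have hcalc : (∫ t in Set.Ioi T, Real.exp T * Real.exp (-1) * Real.exp (-t))
        = Real.exp T * Real.exp (-1) * Real.exp (-T) := by
      rw [integral_const_mul, integral_exp_neg_Ioi]
    rw [hcalc] at hle
    have heq : Real.exp T * Real.exp (-1) * Real.exp (-T) = Real.exp (-1) := by
      rw [mul_comm (Real.exp T), mul_assoc, ← Real.exp_add]; simp
    rw [heq] at hle
    refine hle.trans ?_
    rw [Real.exp_neg]
    have h1e : (1:ℝ) ≤ Real.exp 1 := by nlinarith [Real.add_one_le_exp (1:ℝ)]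
    exact inv_le_one_of_one_le₀ h1e
  have hTval : T = Real.log 2 - Real.log w := by
    rw [hT, Real.log_div (by norm_num) hw0.ne']
  have hlog2 : Real.log 2 ≤ 1 := by
    nlinarith [Real.log_le_sub_one_of_pos (show (0:ℝ) < 2 by norm_num)]
  linarith [hsplit.le, h1, h2]

lemma K0_lower {w : ℝ} (hw0 : 0 < w) (hw1 : w ≤ 1) : -Real.log w - 1 ≤ K0 w := by
  set f : ℝ → ℝ := fun t => Real.exp (-w * Real.cosh t) with hf
  set T : ℝ := -Real.log w with hT
  have hT0 : 0 ≤ T := by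
    rw [hT]; simp only [neg_nonneg]; exact Real.log_nonpos hw0.le hw1
  have hexpT : Real.exp T = 1 / w := by
    rw [hT, Real.exp_neg, Real.exp_log hw0]; ring
  have hint : IntegrableOn f (Set.Ioi (0:ℝ)) := K0_integrableOn hw0
  have h1 : (∫ t in Set.Ioc 0 T, f t) ≤ K0 w := by
    rw [K0]
    apply setIntegral_mono_set hint
    · filter_upwards with t using Real.exp_nonneg _
    · exact HasSubset.Subset.eventuallyLE Set.Ioc_subset_Ioi_self
  have h2 : (∫ t in Set.Ioc 0 T, (1 - w * Real.exp t)) ≤ ∫ t in Set.Ioc 0 T, f t := by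
    apply setIntegral_mono_on
      ((continuous_const.sub (continuous_const.mul Real.continuous_exp)).integrableOn_Ioc)
      (hint.mono_set Set.Ioc_subset_Ioi_self) measurableSet_Ioc
    intro u hu
    have hcosh : Real.cosh u ≤ Real.exp u := by
      rw [Real.cosh_eq]
      have : Real.exp (-u) ≤ Real.exp u := Real.exp_le_exp.2 (by linarith [hu.1.le])
      linarith
    calc 1 - w * Real.exp u ≤ Real.exp (-(w * Real.exp u)) := by
          linarith [Real.add_one_le_exp (-(w * Real.exp u))]
      _ ≤ f u := Real.exp_le_exp.2 (by nlinarith)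
  have h3 : (∫ t in Set.Ioc 0 T, (1 - w * Real.exp t)) = T - (1 - w) := by
    rw [← intervalIntegral.integral_of_le hT0]
    rw [intervalIntegral.integral_sub intervalIntegrable_const
      ((Real.continuous_exp.intervalIntegrable 0 T).const_mul w)]
    rw [intervalIntegral.integral_const, intervalIntegral.integral_const_mul, integral_exp]
    rw [hexpT]
    field_simp
    simp
  nlinarith [h1, h2, h3, hw0]

lemma K0_abs_bound {w : ℝ} (hw0 : 0 < w) (hw1 : w ≤ 1) : |K0 w + Real.log w| ≤ 2 := by
  rw [abs_le]
  constructor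
  · linarith [K0_lower hw0 hw1]
  · linarith [K0_upper hw0 hw1]

/-- If `s ∈ [0,1)`, `t ∈ {1,2}` and `V ∈ L¹(ℝ²)` is real-valued and satisfies
(V_ln_s) and (V_roll), then the integrals
`I₁(α) = ∫_{ln‖x−y‖<1} |V(x)|·|G(x,y;α) − g(α)|^t·|V(y)| d(x,y)`
are bounded uniformly in `α ∈ (0,1/e)`. -/
theorem I1_uniformly_bounded (s t : ℝ) (hs : s ∈ Set.Ico (0 : ℝ) 1)
    (ht : t = 1 ∨ t = 2)
    (V : EuclideanSpace ℝ (Fin 2) → ℝ) (hV : Integrable V)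
    (hlns : ∫⁻ x in {x : EuclideanSpace ℝ (Fin 2) | 1 < ‖x‖},
      ENNReal.ofReal (|Real.log ‖x‖| ^ s * |V x|) < ⊤)
    (hroll : ∫⁻ p in {p : EuclideanSpace ℝ (Fin 2) × EuclideanSpace ℝ (Fin 2) |
        ‖p.1 - p.2‖ < Real.exp 1},
      ENNReal.ofReal (|V p.1| * (Real.log ‖p.1 - p.2‖) ^ 2 * |V p.2|) < ⊤) :
    ∃ C : ℝ, 0 < C ∧ ∀ α : ℝ, α ∈ Set.Ioo (0 : ℝ) (Real.exp 1)⁻¹ →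
      ∫⁻ p in {p : EuclideanSpace ℝ (Fin 2) × EuclideanSpace ℝ (Fin 2) |
          Real.log ‖p.1 - p.2‖ < 1},
        ENNReal.ofReal (|V p.1| * |G p.1 p.2 α - g α| ^ t * |V p.2|) ≤
      ENNReal.ofReal C := by
  classical
  set S : Set (EuclideanSpace ℝ (Fin 2) × EuclideanSpace ℝ (Fin 2)) := {p : EuclideanSpace ℝ (Fin 2) × EuclideanSpace ℝ (Fin 2) | Real.log ‖p.1 - p.2‖ < 1} with hS
  -- abbreviations
  set L : ENNReal := ∫⁻ x, ENNReal.ofReal |V x| with hL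
  have hLlt : L < ⊤ := hV.abs.lintegral_lt_top
  set R : ENNReal := ∫⁻ p in {p : EuclideanSpace ℝ (Fin 2) × EuclideanSpace ℝ (Fin 2) | ‖p.1 - p.2‖ < Real.exp 1},
      ENNReal.ofReal (|V p.1| * (Real.log ‖p.1 - p.2‖) ^ 2 * |V p.2|) with hR
  have hRlt : R < ⊤ := hroll
  set Etot : ENNReal := 8 * (L * L) + 2 * R with hEtot
  have hElt : Etot < ⊤ := by
    apply ENNReal.add_lt_top.2
    constructor
    · exact ENNReal.mul_lt_top (by norm_num) (ENNReal.mul_lt_top hLlt hLlt)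
    · exact ENNReal.mul_lt_top (by norm_num) hRlt
  refine ⟨Etot.toReal + 1, by positivity, ?_⟩
  intro α hα
  -- measurability helpers
  have hVaem : AEMeasurable (fun x : EuclideanSpace ℝ (Fin 2) => ENNReal.ofReal |V x|) volume :=
    ENNReal.measurable_ofReal.comp_aemeasurable (continuous_abs.measurable.comp_aemeasurable hV.aestronglyMeasurable.aemeasurable)
  have hfst : AEMeasurable (fun p : EuclideanSpace ℝ (Fin 2) × EuclideanSpace ℝ (Fin 2) => ENNReal.ofReal |V p.1|) volume := by
    rw [MeasureTheory.Measure.volume_eq_prod]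
    exact hVaem.comp_quasiMeasurePreserving Measure.quasiMeasurePreserving_fst
  have hsnd : AEMeasurable (fun p : EuclideanSpace ℝ (Fin 2) × EuclideanSpace ℝ (Fin 2) => ENNReal.ofReal |V p.2|) volume := by
    rw [MeasureTheory.Measure.volume_eq_prod]
    exact hVaem.comp_quasiMeasurePreserving Measure.quasiMeasurePreserving_snd
  -- the diagonal is null
  have hdiag : volume {p : EuclideanSpace ℝ (Fin 2) × EuclideanSpace ℝ (Fin 2) | p.1 = p.2} = 0 := by
    have hms : MeasurableSet {p : EuclideanSpace ℝ (Fin 2) × EuclideanSpace ℝ (Fin 2) | p.1 = p.2} :=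
      measurableSet_eq_fun measurable_fst measurable_snd
    rw [MeasureTheory.Measure.volume_eq_prod, Measure.prod_apply hms]
    have : ∀ x : EuclideanSpace ℝ (Fin 2), (volume : Measure (EuclideanSpace ℝ (Fin 2))) (Prod.mk x ⁻¹' {p : EuclideanSpace ℝ (Fin 2) × EuclideanSpace ℝ (Fin 2) | p.1 = p.2}) = 0 := by
      intro x
      have : Prod.mk x ⁻¹' {p : EuclideanSpace ℝ (Fin 2) × EuclideanSpace ℝ (Fin 2) | p.1 = p.2} = {x} := by
        ext y; simp [eq_comm]
      rw [this]
      exact measure_singleton x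
    simp [this]
  -- pointwise bound off the diagonal
  have hpt : ∀ p : EuclideanSpace ℝ (Fin 2) × EuclideanSpace ℝ (Fin 2), p ∈ S → p.1 ≠ p.2 →
      |V p.1| * |G p.1 p.2 α - g α| ^ t * |V p.2| ≤
        8 * (|V p.1| * |V p.2|) +
        2 * (|V p.1| * (Real.log ‖p.1 - p.2‖) ^ 2 * |V p.2|) := by
    intro p hp hne
    set r : ℝ := ‖p.1 - p.2‖ with hr
    have hr0 : 0 < r := by
      rw [hr, norm_pos_iff]
      exact sub_ne_zero.mpr hne
    have hrlt : r < Real.exp 1 := by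
      have := Real.exp_log hr0
      calc r = Real.exp (Real.log r) := (Real.exp_log hr0).symm
        _ < Real.exp 1 := Real.exp_lt_exp.2 hp
    have hw0 : 0 < α * r := mul_pos hα.1 hr0
    have hw1 : α * r < 1 := by
      calc α * r < (Real.exp 1)⁻¹ * Real.exp 1 :=
            mul_lt_mul'' hα.2 hrlt hα.1.le hr0.le
        _ = 1 := inv_mul_cancel₀ (Real.exp_ne_zero 1)
    have hK : |K0 (α * r) + Real.log (α * r)| ≤ 2 := K0_abs_bound hw0 hw1.le
    set l : ℝ := Real.log r with hl
    have hGg : G p.1 p.2 α - g α = (K0 (α * r) + Real.log (α * r) - l) / (2 * Real.pi) := by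
      rw [G, g, Real.log_mul hα.1.ne' hr0.ne', hl]
      field_simp
      ring
    have hpi : 1 ≤ 2 * Real.pi := by nlinarith [Real.pi_gt_three]
    have hM : |G p.1 p.2 α - g α| ≤ 2 + |l| := by
      rw [hGg, abs_div, abs_of_pos (by positivity : (0:ℝ) < 2 * Real.pi)]
      have h1 : |K0 (α * r) + Real.log (α * r) - l| ≤ 2 + |l| := by
        calc |K0 (α * r) + Real.log (α * r) - l|
            ≤ |K0 (α * r) + Real.log (α * r)| + |l| := abs_sub _ _
          _ ≤ 2 + |l| := by linarith
      calc |K0 (α * r) + Real.log (α * r) - l| / (2 * Real.pi)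
          ≤ |K0 (α * r) + Real.log (α * r) - l| :=
            div_le_self (abs_nonneg _) hpi
        _ ≤ 2 + |l| := h1
    have hMnn : (0:ℝ) ≤ |G p.1 p.2 α - g α| := abs_nonneg _
    have hMt : |G p.1 p.2 α - g α| ^ t ≤ 8 + 2 * l ^ 2 := by
      rcases ht with ht1 | ht2
      · rw [ht1, Real.rpow_one]
        nlinarith [sq_abs l, sq_nonneg (|l| - 1), abs_nonneg l]
      · rw [ht2, show (2:ℝ) = ((2:ℕ):ℝ) by norm_num, Real.rpow_natCast]
        have : |G p.1 p.2 α - g α| ^ (2:ℕ) ≤ (2 + |l|) ^ (2:ℕ) :=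
          pow_le_pow_left₀ hMnn hM 2
        push_cast
        nlinarith [sq_abs l, sq_nonneg (|l| - 2), abs_nonneg l]
    have hu : (0:ℝ) ≤ |V p.1| := abs_nonneg _
    have hv : (0:ℝ) ≤ |V p.2| := abs_nonneg _
    calc |V p.1| * |G p.1 p.2 α - g α| ^ t * |V p.2|
        ≤ |V p.1| * (8 + 2 * l ^ 2) * |V p.2| :=
          mul_le_mul_of_nonneg_right (mul_le_mul_of_nonneg_left hMt hu) hv
      _ = 8 * (|V p.1| * |V p.2|) + 2 * (|V p.1| * l ^ 2 * |V p.2|) := by ring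
  -- a.e. bound on the restricted measure
  have hae : ∀ᵐ p ∂(volume.restrict S),
      ENNReal.ofReal (|V p.1| * |G p.1 p.2 α - g α| ^ t * |V p.2|) ≤
        ENNReal.ofReal (8 * (|V p.1| * |V p.2|)) +
        ENNReal.ofReal (2 * (|V p.1| * (Real.log ‖p.1 - p.2‖) ^ 2 * |V p.2|)) := by
    have hSm : MeasurableSet S := by
      have : Measurable fun p : EuclideanSpace ℝ (Fin 2) × EuclideanSpace ℝ (Fin 2) => Real.log ‖p.1 - p.2‖ :=
        Real.measurable_log.comp ((continuous_fst.sub continuous_snd).norm).measurable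
      exact this measurableSet_Iio
    have h1 : ∀ᵐ p ∂(volume.restrict S), p ∈ S := ae_restrict_mem hSm
    have h2 : ∀ᵐ p ∂(volume.restrict S), p.1 ≠ p.2 := by
      refine ae_restrict_of_ae ?_
      rw [ae_iff]
      convert hdiag using 2
      ext p; simp
    filter_upwards [h1, h2] with p hp hne
    calc ENNReal.ofReal (|V p.1| * |G p.1 p.2 α - g α| ^ t * |V p.2|)
        ≤ ENNReal.ofReal (8 * (|V p.1| * |V p.2|) +
            2 * (|V p.1| * (Real.log ‖p.1 - p.2‖) ^ 2 * |V p.2|)) :=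
          ENNReal.ofReal_le_ofReal (hpt p hp hne)
      _ ≤ _ := ENNReal.ofReal_add_le
  -- combine
  have hstep : (∫⁻ p in S,
      ENNReal.ofReal (|V p.1| * |G p.1 p.2 α - g α| ^ t * |V p.2|)) ≤ Etot := by
    calc (∫⁻ p in S, ENNReal.ofReal (|V p.1| * |G p.1 p.2 α - g α| ^ t * |V p.2|))
        ≤ ∫⁻ p in S, (ENNReal.ofReal (8 * (|V p.1| * |V p.2|)) +
            ENNReal.ofReal (2 * (|V p.1| * (Real.log ‖p.1 - p.2‖) ^ 2 * |V p.2|))) :=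
          lintegral_mono_ae hae
      _ = (∫⁻ p in S, ENNReal.ofReal (8 * (|V p.1| * |V p.2|))) +
          ∫⁻ p in S, ENNReal.ofReal (2 * (|V p.1| * (Real.log ‖p.1 - p.2‖) ^ 2 * |V p.2|)) := by
          apply lintegral_add_left'
          have : (fun p : EuclideanSpace ℝ (Fin 2) × EuclideanSpace ℝ (Fin 2) => ENNReal.ofReal (8 * (|V p.1| * |V p.2|)))
              = fun p : EuclideanSpace ℝ (Fin 2) × EuclideanSpace ℝ (Fin 2) => 8 * (ENNReal.ofReal |V p.1| * ENNReal.ofReal |V p.2|) := by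
            funext p
            rw [ENNReal.ofReal_mul (by norm_num : (0:ℝ) ≤ 8),
              ENNReal.ofReal_mul (abs_nonneg _)]
            norm_num
          rw [this]
          exact ((hfst.mul hsnd).const_mul 8).restrict
      _ ≤ 8 * (L * L) + 2 * R := by
          gcongr
          · -- first piece
            have heq : (fun p : EuclideanSpace ℝ (Fin 2) × EuclideanSpace ℝ (Fin 2) => ENNReal.ofReal (8 * (|V p.1| * |V p.2|)))
                = fun p : EuclideanSpace ℝ (Fin 2) × EuclideanSpace ℝ (Fin 2) => 8 * (ENNReal.ofReal |V p.1| * ENNReal.ofReal |V p.2|) := by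
              funext p
              rw [ENNReal.ofReal_mul (by norm_num : (0:ℝ) ≤ 8),
                ENNReal.ofReal_mul (abs_nonneg _)]
              norm_num
            calc (∫⁻ p in S, ENNReal.ofReal (8 * (|V p.1| * |V p.2|)))
                ≤ ∫⁻ p : EuclideanSpace ℝ (Fin 2) × EuclideanSpace ℝ (Fin 2), ENNReal.ofReal (8 * (|V p.1| * |V p.2|)) :=
                  setLIntegral_le_lintegral _ _
              _ = 8 * ∫⁻ p : EuclideanSpace ℝ (Fin 2) × EuclideanSpace ℝ (Fin 2), ENNReal.ofReal |V p.1| * ENNReal.ofReal |V p.2| := by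
                  rw [heq, lintegral_const_mul' 8 _ (by norm_num)]
              _ = 8 * (L * L) := by
                  rw [MeasureTheory.Measure.volume_eq_prod, lintegral_prod_mul hVaem hVaem]
          · -- second piece
            have heq : (fun p : EuclideanSpace ℝ (Fin 2) × EuclideanSpace ℝ (Fin 2) =>
                ENNReal.ofReal (2 * (|V p.1| * (Real.log ‖p.1 - p.2‖) ^ 2 * |V p.2|)))
                = fun p : EuclideanSpace ℝ (Fin 2) × EuclideanSpace ℝ (Fin 2) => 2 *
                  ENNReal.ofReal (|V p.1| * (Real.log ‖p.1 - p.2‖) ^ 2 * |V p.2|) := by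
              funext p
              rw [ENNReal.ofReal_mul (by norm_num : (0:ℝ) ≤ 2)]
              norm_num
            have hsub : S ⊆ {p : EuclideanSpace ℝ (Fin 2) × EuclideanSpace ℝ (Fin 2) | ‖p.1 - p.2‖ < Real.exp 1} := by
              intro p hp
              rcases eq_or_lt_of_le (norm_nonneg (p.1 - p.2)) with h0 | h0
              · simp only [Set.mem_setOf_eq, ← h0]
                exact Real.exp_pos 1
              · simp only [Set.mem_setOf_eq]
                calc ‖p.1 - p.2‖ = Real.exp (Real.log ‖p.1 - p.2‖) :=
                      (Real.exp_log h0).symm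
                  _ < Real.exp 1 := Real.exp_lt_exp.2 hp
            calc (∫⁻ p in S, ENNReal.ofReal (2 * (|V p.1| * (Real.log ‖p.1 - p.2‖) ^ 2 * |V p.2|)))
                ≤ ∫⁻ p in {p : EuclideanSpace ℝ (Fin 2) × EuclideanSpace ℝ (Fin 2) | ‖p.1 - p.2‖ < Real.exp 1},
                    ENNReal.ofReal (2 * (|V p.1| * (Real.log ‖p.1 - p.2‖) ^ 2 * |V p.2|)) :=
                  lintegral_mono_set hsub
              _ = 2 * R := by
                  rw [hR]
                  simp only [heq]
                  rw [lintegral_const_mul' 2 _ (by norm_num)]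
  refine hstep.trans ?_
  have : Etot = ENNReal.ofReal Etot.toReal := (ENNReal.ofReal_toReal hElt.ne).symm
  nth_rewrite 1 [this]
  exact ENNReal.ofReal_le_ofReal (by linarith [ENNReal.toReal_nonneg (a := Etot)])
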